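/- Let M be an ε-locally differentially private mechanism, k ≥ 4, and let the prior on X induce a distribution on V = f_A(X) ∈ S^{k-1} whose density with respect to the uniform measure on S^{k-1} is at most e^{ρ₀}. Then for every estimator v̂ and every output z, and for a ∈ [0, 1/√2], P(‖V - v̂(z)/‖v̂(z)‖₂‖₂ ≤ √(2 - 2a) | M = z) ≤ exp(ε + ρ₀ + (k/2) log(1 - a²)). -/

import Mathlib

/-!
Bayes' rule and ε-local differential privacy bound the posterior of any event by `e^ε` times its
prior probability, and the density assumption bounds that prior by `e^{ρ₀}` times the uniform
measure of the corresponding set of the sphere. A successful reconstruction places `V` in the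
spherical cap `{u | a ≤ ⟪u, w⟫}` around the normalized estimate `w`; rescaling the cap by factors
in `(0, 1)` stays inside the ball of radius `√(1 - a²)` centred at `a • w` as long as `a² ≤ 1/2`, so
the cap has normalized measure at most `(1 - a²)^{k/2}`.
-/

open MeasureTheory Real Classical
open scoped ENNReal

/-- The uniform probability measure on the unit sphere `S^{k-1} ⊂ ℝ^k`. -/
noncomputable def uniformSphere (k : ℕ) :
    Measure (Metric.sphere (0 : EuclideanSpace ℝ (Fin k)) 1) :=
  ((volume : Measure (EuclideanSpace ℝ (Fin k))).toSphere Set.univ)⁻¹ •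
    (volume : Measure (EuclideanSpace ℝ (Fin k))).toSphere

/-- The reconstruction loss `L(u,v) = ‖u - v/‖v‖‖₂`, set to `√2` when `v = 0`. -/

noncomputable def Lrec {k : ℕ} (u v : EuclideanSpace ℝ (Fin k)) : ℝ :=
  if v = 0 then Real.sqrt 2 else ‖u - ‖v‖⁻¹ • v‖

open Metric Set
open scoped RealInnerProductSpace Pointwise

theorem setLIntegral_div_lintegral_le_mul_measure {X : Type*} [MeasurableSpace X]
    {μ : Measure X} [IsProbabilityMeasure μ] {g : X → ℝ≥0∞} {c : ℝ≥0∞} (hc : c ≠ ⊤)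
    (hg : ∀ x x', g x ≤ c * g x') (S : Set X) :
    (∫⁻ x in S, g x ∂μ) / ∫⁻ x, g x ∂μ ≤ c * μ S := by
  have hpointwise : ∀ x', ∫⁻ x in S, g x ∂μ ≤ c * μ S * g x' := fun x' =>
    calc ∫⁻ x in S, g x ∂μ ≤ ∫⁻ _ in S, c * g x' ∂μ := lintegral_mono fun x => hg x x'
      _ = c * μ S * g x' := by rw [setLIntegral_const]; ring
  refine ENNReal.div_le_of_le_mul ?_
  calc ∫⁻ x in S, g x ∂μ = ∫⁻ _, ∫⁻ x in S, g x ∂μ ∂μ := by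
        rw [lintegral_const, measure_univ, mul_one]
    _ ≤ ∫⁻ x', c * μ S * g x' ∂μ := lintegral_mono hpointwise
    _ = c * μ S * ∫⁻ x', g x' ∂μ :=
        lintegral_const_mul' _ _ (ENNReal.mul_ne_top hc (measure_ne_top _ _))

section Cap

variable {E : Type*} [NormedAddCommGroup E] [InnerProductSpace ℝ E]

theorem le_inner_of_norm_sub_le_sqrt {u w : E} {a : ℝ} (hu : ‖u‖ = 1) (hw : ‖w‖ = 1)
    (ha : a ≤ 1) (h : ‖u - w‖ ≤ √(2 - 2 * a)) : a ≤ ⟪u, w⟫ := by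
  have hsq := (Real.le_sqrt (norm_nonneg _) (by linarith)).1 h
  rw [norm_sub_sq_real, hu, hw] at hsq
  linarith

theorem norm_smul_sub_smul_sq_le {u w : E} {a r : ℝ} (hu : ‖u‖ = 1) (hw : ‖w‖ = 1)
    (ha0 : 0 ≤ a) (ha2 : a ^ 2 ≤ 1 / 2) (hinner : a ≤ ⟪u, w⟫) (hr0 : 0 ≤ r) (hr1 : r ≤ 1) :
    ‖r • u - a • w‖ ^ 2 ≤ 1 - a ^ 2 := by
  have hexpand : ‖r • u - a • w‖ ^ 2 = r ^ 2 - 2 * (r * a) * ⟪u, w⟫ + a ^ 2 := by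
    rw [norm_sub_sq_real, real_inner_smul_left, real_inner_smul_right, norm_smul, norm_smul,
      hu, hw, Real.norm_of_nonneg hr0, Real.norm_of_nonneg ha0]
    ring
  have hra : r * a * a ≤ r * a * ⟪u, w⟫ := mul_le_mul_of_nonneg_left hinner (by positivity)
  -- `1 - a² - (r² - 2ra² + a²) = (1 - r)(1 + r - 2a²)`
  nlinarith [mul_nonneg (sub_nonneg.2 hr1) (by linarith : (0 : ℝ) ≤ 1 + r - 2 * a ^ 2)]

variable [FiniteDimensional ℝ E] [MeasurableSpace E] [BorelSpace E]
  (μ : Measure E) [μ.IsAddHaarMeasure]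

theorem toSphere_setOf_le_inner_le {w : E} {a : ℝ} (hw : ‖w‖ = 1) (ha0 : 0 ≤ a)
    (ha2 : a ^ 2 ≤ 1 / 2) :
    μ.toSphere {u | a ≤ ⟪(u : E), w⟫} ≤
      ENNReal.ofReal (√(1 - a ^ 2) ^ Module.finrank ℝ E) * μ.toSphere univ := by
  have hcone : Ioo (0 : ℝ) 1 • ((↑) '' {u : sphere (0 : E) 1 | a ≤ ⟪(u : E), w⟫}) ⊆
      closedBall (a • w) √(1 - a ^ 2) := by
    rintro _ ⟨r, hr, _, ⟨u, hu, rfl⟩, rfl⟩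
    rw [mem_closedBall, dist_eq_norm]
    exact Real.le_sqrt_of_sq_le (norm_smul_sub_smul_sq_le (by simp) hw ha0 ha2 hu hr.1.le hr.2.le)
  have hmeas : MeasurableSet {u : sphere (0 : E) 1 | a ≤ ⟪(u : E), w⟫} :=
    (isClosed_le continuous_const (by fun_prop)).measurableSet
  rw [μ.toSphere_apply' hmeas, μ.toSphere_apply_univ, mul_left_comm]
  gcongr
  calc μ (Ioo (0 : ℝ) 1 • ((↑) '' {u : sphere (0 : E) 1 | a ≤ ⟪(u : E), w⟫}))
      ≤ μ (closedBall (a • w) √(1 - a ^ 2)) := measure_mono hcone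
    _ = _ := μ.addHaar_closedBall _ (Real.sqrt_nonneg _)

end Cap

theorem uniformSphere_le_of_toSphere_le {k : ℕ}
    {s : Set (sphere (0 : EuclideanSpace ℝ (Fin k)) 1)} {c : ℝ≥0∞}
    (h : (volume : Measure (EuclideanSpace ℝ (Fin k))).toSphere s ≤
      c * (volume : Measure (EuclideanSpace ℝ (Fin k))).toSphere univ) :
    uniformSphere k s ≤ c := by
  rw [uniformSphere, Measure.smul_apply, smul_eq_mul, mul_comm, ← div_eq_mul_inv]
  exact ENNReal.div_le_of_le_mul h

theorem continuous_Lrec_left {k : ℕ} (v : EuclideanSpace ℝ (Fin k)) :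
    Continuous fun u => Lrec u v := by
  unfold Lrec
  split_ifs <;> fun_prop

theorem uniformSphere_setOf_Lrec_le {k : ℕ} (v : EuclideanSpace ℝ (Fin k)) {a : ℝ}
    (ha0 : 0 ≤ a) (ha2 : a ^ 2 ≤ 1 / 2) :
    uniformSphere k {u | Lrec (u : EuclideanSpace ℝ (Fin k)) v ≤ √(2 - 2 * a)} ≤
      ENNReal.ofReal (√(1 - a ^ 2) ^ k) := by
  have hk : Module.finrank ℝ (EuclideanSpace ℝ (Fin k)) = k := finrank_euclideanSpace_fin
  apply uniformSphere_le_of_toSphere_le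
  by_cases hv : v = 0
  · rcases ha0.eq_or_lt with rfl | hapos
    · simpa using measure_mono (μ := (volume : Measure (EuclideanSpace ℝ (Fin k))).toSphere)
        (subset_univ _)
    · have hempty : {u : sphere (0 : EuclideanSpace ℝ (Fin k)) 1 |
          Lrec (u : EuclideanSpace ℝ (Fin k)) v ≤ √(2 - 2 * a)} = ∅ := by
        ext u
        simp only [Lrec, if_pos hv, mem_ofPred_eq, mem_empty_iff_false, iff_false, not_le]
        exact Real.sqrt_lt_sqrt (by nlinarith) (by linarith)
      simp [hempty]
  · have hw : ‖‖v‖⁻¹ • v‖ = 1 := by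
      rw [norm_smul, norm_inv, norm_norm, inv_mul_cancel₀ (norm_ne_zero_iff.2 hv)]
    calc _ ≤ (volume : Measure (EuclideanSpace ℝ (Fin k))).toSphere
          {u | a ≤ ⟪(u : EuclideanSpace ℝ (Fin k)), ‖v‖⁻¹ • v⟫} := by
          refine measure_mono fun u hu => le_inner_of_norm_sub_le_sqrt (by simp)
            hw (by nlinarith) ?_
          simpa only [mem_ofPred_eq, Lrec, if_neg hv] using hu
      _ ≤ _ := by
          simpa only [hk] using toSphere_setOf_le_inner_le volume hw ha0 ha2

theorem sqrt_pow_eq_exp_mul_log {t : ℝ} (ht : 0 < t) (k : ℕ) :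
    √t ^ k = exp ((k : ℝ) / 2 * Real.log t) := by
  rw [← Real.rpow_natCast, Real.rpow_def_of_pos (Real.sqrt_pos.2 ht), Real.log_sqrt ht.le]
  ring_nf

/-- The posterior of the event under `M = z` is written by Bayes' rule as a ratio of integrals
against the mechanism's density `g`. -/
theorem reconstruction_breach_bound_general
    {X Z : Type*} [MeasurableSpace X]
    (k : ℕ)
    (pri : Measure X) [IsProbabilityMeasure pri] (ρ₀ : ℝ)
    (f : X → Metric.sphere (0 : EuclideanSpace ℝ (Fin k)) 1)
    (hdens : ∀ s : Set (Metric.sphere (0 : EuclideanSpace ℝ (Fin k)) 1), MeasurableSet s →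
      pri (f ⁻¹' s) ≤ ENNReal.ofReal (exp ρ₀) * uniformSphere k s)
    (g : X → Z → ℝ≥0∞) (ε : ℝ)
    (hDP : ∀ x x' : X, ∀ z : Z, g x z ≤ ENNReal.ofReal (exp ε) * g x' z)
    (vhat : Z → EuclideanSpace ℝ (Fin k)) (z : Z)
    (a : ℝ) (ha0 : 0 ≤ a) (ha : a ≤ 1 / Real.sqrt 2) :
    (∫⁻ x in {x | Lrec ((f x : EuclideanSpace ℝ (Fin k))) (vhat z) ≤ Real.sqrt (2 - 2 * a)},
        g x z ∂pri) / (∫⁻ x, g x z ∂pri)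
      ≤ ENNReal.ofReal (exp (ε + ρ₀ + ((k : ℝ) / 2) * Real.log (1 - a ^ 2))) := by
  have ha2 : a ^ 2 ≤ 1 / 2 := by
    calc a ^ 2 ≤ (1 / √2) ^ 2 := pow_le_pow_left₀ ha0 ha 2
      _ = 1 / 2 := by rw [div_pow, one_pow, Real.sq_sqrt zero_le_two]
  set s := {u : sphere (0 : EuclideanSpace ℝ (Fin k)) 1 |
    Lrec (u : EuclideanSpace ℝ (Fin k)) (vhat z) ≤ √(2 - 2 * a)}
  have hs : MeasurableSet s :=
    (isClosed_le ((continuous_Lrec_left _).comp continuous_subtype_val)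
      continuous_const).measurableSet
  calc _ ≤ ENNReal.ofReal (exp ε) * pri (f ⁻¹' s) :=
        setLIntegral_div_lintegral_le_mul_measure ENNReal.ofReal_ne_top (hDP · · z) _
    _ ≤ ENNReal.ofReal (exp ε) * (ENNReal.ofReal (exp ρ₀) * ENNReal.ofReal (√(1 - a ^ 2) ^ k)) := by
        gcongr
        exact (hdens s hs).trans (by gcongr; exact uniformSphere_setOf_Lrec_le _ ha0 ha2)
    _ = _ := by
        rw [sqrt_pow_eq_exp_mul_log (by linarith) k, ← ENNReal.ofReal_mul (exp_pos _).le,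
          ← ENNReal.ofReal_mul (exp_pos _).le, ← exp_add, ← exp_add, add_assoc]

/-- protection against reconstruction of `V = f(X) ∈ S^{k-1}` under an ε-locally
differentially private mechanism with density `g`, when the prior of `V` has density at most
`e^{ρ₀}` w.r.t. the uniform measure on `S^{k-1}`.  The posterior probability
`P(‖V - v̂(z)/‖v̂(z)‖‖ ≤ √(2-2a) | M = z)` is given by Bayes' rule as a ratio of integrals. -/
theorem reconstruction_breach_bound
    {X Z : Type*} [MeasurableSpace X] [MeasurableSpace Z]
    (k : ℕ) (hk : 4 ≤ k)
    (pri : Measure X) [IsProbabilityMeasure pri] (ρ₀ : ℝ)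
    (f : X → Metric.sphere (0 : EuclideanSpace ℝ (Fin k)) 1) (hf : Measurable f)
    (hdens : ∀ s : Set (Metric.sphere (0 : EuclideanSpace ℝ (Fin k)) 1), MeasurableSet s →
      pri (f ⁻¹' s) ≤ ENNReal.ofReal (exp ρ₀) * uniformSphere k s)
    (g : X → Z → ℝ≥0∞) (ε : ℝ)
    (hDP : ∀ x x' : X, ∀ z : Z, g x z ≤ ENNReal.ofReal (exp ε) * g x' z)
    (vhat : Z → EuclideanSpace ℝ (Fin k)) (z : Z)
    (hz : 0 < ∫⁻ x, g x z ∂pri) (hz' : (∫⁻ x, g x z ∂pri) ≠ ⊤)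
    (a : ℝ) (ha0 : 0 ≤ a) (ha : a ≤ 1 / Real.sqrt 2) :
    (∫⁻ x in {x | Lrec ((f x : EuclideanSpace ℝ (Fin k))) (vhat z) ≤ Real.sqrt (2 - 2 * a)},
        g x z ∂pri) / (∫⁻ x, g x z ∂pri)
      ≤ ENNReal.ofReal (exp (ε + ρ₀ + ((k : ℝ) / 2) * Real.log (1 - a ^ 2))) :=
  reconstruction_breach_bound_general k pri ρ₀ f hdens g ε hDP vhat z a ha0 ha
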